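/- arXiv:2310.16997 — 5 statements merged into one kernel-verified Lean document; each statement's English description precedes it below -/
import Mathlib

section
/- Let S ∈ ℝ^{n×m} be a partial diagonal matrix with full column rank and set T_j = −sʲ (the negative of the j-th column of S) for each j. Then for every matrix M ∈ ℝ^{n×n}, Proj_{S,T_{1:m}} M = Proj_{S,T_{1:m}} Diag[M_{1,1},…,M_{n,n}]; i.e., the projection of M depends only on the diagonal entries of M. -/
open Matrix

/-- The four Moore–Penrose equations for a pseudoinverse `B` of `A`. -/
def IsMPInv {k l : ℕ} (A : Matrix (Fin k) (Fin l) ℝ) (B : Matrix (Fin l) (Fin k) ℝ) : Prop :=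
  A * B * A = A ∧ B * A * B = B ∧ (A * B)ᵀ = A * B ∧ (B * A)ᵀ = B * A

/-!
Each summand of the projection is a multiple of the fixed matrix `(Sᵀ)† e^j (T_j)†`, namely by
the scalar `(sʲ)ᵀ M T_j = -(sʲ)ᵀ M sʲ`. As `sʲ` is a multiple of a standard basis vector
`e^{u_j}`, this quadratic form only sees the diagonal entry `M_{u_j,u_j}`.
-/

theorem Matrix.mul_vecMulVec_mul_mul_vecMulVec {R l m n p r : Type*} [CommSemiring R]
    [Fintype m] [Fintype n] [Fintype p]
    (B : Matrix l m R) (x y : m → R) (A : Matrix m n R) (M : Matrix n p R)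
    (t : p → R) (w : r → R) :
    B * vecMulVec x y * A * M * vecMulVec t w = (y ᵥ* A ⬝ᵥ M *ᵥ t) • (B * vecMulVec x w) := by
  rw [Matrix.mul_assoc B, Matrix.mul_assoc B, Matrix.mul_assoc B, vecMulVec_mul, vecMulVec_mul,
    vecMulVec_mul_vecMulVec, vecMulVec_smul, Matrix.mul_smul, ← dotProduct_mulVec]

theorem Matrix.single_dotProduct_mulVec_single {R n : Type*} [CommSemiring R] [Fintype n]
    [DecidableEq n] (M : Matrix n n R) (k : n) (a b : R) :
    Pi.single k a ⬝ᵥ M *ᵥ Pi.single k b = a * M k k * b := by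
  simp [mul_comm]

theorem Matrix.single_dotProduct_mulVec_single_eq_diagonal {R n : Type*} [CommSemiring R]
    [Fintype n] [DecidableEq n] (M : Matrix n n R) (k : n) (a b : R) :
    Pi.single k a ⬝ᵥ M *ᵥ Pi.single k b =
      Pi.single k a ⬝ᵥ diagonal (fun i => M i i) *ᵥ Pi.single k b := by
  rw [single_dotProduct_mulVec_single, single_dotProduct_mulVec_single, diagonal_apply_eq]

theorem stmt4_general {n m : ℕ}
    (u : Fin m → Fin n)
    (c : Fin m → ℝ)
    (S : Matrix (Fin n) (Fin m) ℝ)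
    (hS : ∀ i j, S i j = if i = u j then c j else 0)
    (Sp : Matrix (Fin n) (Fin m) ℝ)
    (P : Matrix (Fin n) (Fin n) ℝ → Matrix (Fin n) (Fin n) ℝ)
    (hP : ∀ M, P M = ∑ j, Sp * vecMulVec (Pi.single j (1 : ℝ) : Fin m → ℝ)
        (Pi.single j (1 : ℝ) : Fin m → ℝ) * Sᵀ * M *
        vecMulVec (-(fun i => S i j)) ((∑ i, (S i j) ^ 2)⁻¹ • (-(fun i => S i j)))) :
    ∀ M : Matrix (Fin n) (Fin n) ℝ, P M = P (Matrix.diagonal fun i => M i i) := by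
  intro M
  rw [hP, hP]
  refine Finset.sum_congr rfl fun j _ => ?_
  have hcol : (fun i => S i j) = Pi.single (u j) (c j) := by
    ext i
    simp [hS, Pi.single_apply]
  rw [mul_vecMulVec_mul_mul_vecMulVec, mul_vecMulVec_mul_mul_vecMulVec, single_one_vecMul]
  congr 1
  rw [show Sᵀ.row j = fun i => S i j from rfl, hcol, ← Pi.single_neg,
    single_dotProduct_mulVec_single_eq_diagonal]

/-- Let `S ∈ ℝ^{n×m}` be a partial diagonal matrix with full column rank (columns
`sʲ = c_j e^{u_j}`, `c_j ≠ 0`, `u` injective) and take `T_j = −sʲ`.  Then for every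
`M ∈ ℝ^{n×n}`, `Proj_{S,T_{1:m}} M = Proj_{S,T_{1:m}} Diag[M_{1,1},…,M_{n,n}]`, where
`Proj_{S,T_{1:m}} M = Σ_j (Sᵀ)† e^j (e^j)ᵀ Sᵀ M T_j T_j†` and the vector pseudoinverse
is `t† = tᵀ/‖t‖²`. -/
theorem stmt4 {n m : ℕ} (hm : m ≤ n)
    (u : Fin m → Fin n) (hu : Function.Injective u)
    (c : Fin m → ℝ) (hc : ∀ j, c j ≠ 0)
    (S : Matrix (Fin n) (Fin m) ℝ)
    (hS : ∀ i j, S i j = if i = u j then c j else 0)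
    (Sp : Matrix (Fin n) (Fin m) ℝ) (hSp : IsMPInv Sᵀ Sp)
    (P : Matrix (Fin n) (Fin n) ℝ → Matrix (Fin n) (Fin n) ℝ)
    (hP : ∀ M, P M = ∑ j, Sp * vecMulVec (Pi.single j (1 : ℝ) : Fin m → ℝ)
        (Pi.single j (1 : ℝ) : Fin m → ℝ) * Sᵀ * M *
        vecMulVec (-(fun i => S i j)) ((∑ i, (S i j) ^ 2)⁻¹ • (-(fun i => S i j)))) :
    ∀ M : Matrix (Fin n) (Fin n) ℝ, P M = P (Matrix.diagonal fun i => M i i) :=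
  stmt4_general u c S hS Sp P hP
end

section
/- Let f: ℝ^n → ℝ be C³ on an open ball B(x⁰; Δ̄) with ∇²f Lipschitz with constant L on the closed ball, and let s, t ∈ ℝ^n with x⁰+s, x⁰+t, x⁰+s+t in the ball and ‖s‖+‖t‖ ≤ Δ̄. Then |f(x⁰+s+t) − f(x⁰+s) − f(x⁰+t) + f(x⁰) − sᵀ∇²f(x⁰)t| ≤ (1/6)L(‖s+t‖³ + ‖s‖³ + ‖t‖³). -/
/-!
Let `R(d) = f(x⁰+d) − f(x⁰) − ∇f(x⁰)ᵀd − ½ dᵀ∇²f(x⁰)d` be the second-order Taylor remainder.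
Since the Hessian at `x⁰` is symmetric, the cross difference in the theorem equals
`R(s+t) − R(s) − R(t)`, and each remainder is bounded by `L‖d‖³/6`. The latter is a
one-variable statement about `g(τ) = f(x⁰ + τd)`: the Lipschitz bound gives
`|g''(τ) − g''(0)| ≤ L‖d‖³τ`, which integrates twice to
`|g(1) − g(0) − g'(0) − g''(0)/2| ≤ L‖d‖³/6`.
-/

open Metric Set

section Taylor

variable {E : Type*} [NormedAddCommGroup E] [NormedSpace ℝ E]

lemma norm_le_mul_pow_succ_div_of_hasDerivAt {F : Type*} [NormedAddCommGroup F]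
    [NormedSpace ℝ F] {φ φ' : ℝ → F} {a C : ℝ} {k : ℕ} (h0 : φ 0 = 0)
    (hφ : ∀ τ ∈ Icc 0 a, HasDerivAt φ (φ' τ) τ) (hφ' : ∀ τ ∈ Icc 0 a, ‖φ' τ‖ ≤ C * τ ^ k) :
    ∀ τ ∈ Icc 0 a, ‖φ τ‖ ≤ C * τ ^ (k + 1) / (k + 1) := by
  have hB : ∀ τ : ℝ, HasDerivAt (fun τ => C * τ ^ (k + 1) / (k + 1)) (C * τ ^ k) τ := by
    intro τ
    refine (((hasDerivAt_pow (k + 1) τ).const_mul C).div_const ((k : ℝ) + 1)).congr_deriv ?_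
    push_cast
    field_simp
  exact image_norm_le_of_norm_deriv_right_le_deriv_boundary
    (fun τ hτ => (hφ τ hτ).continuousAt.continuousWithinAt)
    (fun τ hτ => (hφ τ (Ico_subset_Icc_self hτ)).hasDerivWithinAt) (by simp [h0]) hB
    (fun τ hτ => hφ' τ (Ico_subset_Icc_self hτ))

lemma abs_taylor_remainder_two_le_of_hasDerivAt {g g' g'' : ℝ → ℝ} {C : ℝ}
    (hg : ∀ τ ∈ Icc (0 : ℝ) 1, HasDerivAt g (g' τ) τ)
    (hg' : ∀ τ ∈ Icc (0 : ℝ) 1, HasDerivAt g' (g'' τ) τ)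
    (hg'' : ∀ τ ∈ Icc (0 : ℝ) 1, |g'' τ - g'' 0| ≤ C * τ) :
    |g 1 - g 0 - g' 0 - g'' 0 / 2| ≤ C / 6 := by
  have first_order : ∀ τ ∈ Icc (0 : ℝ) 1, ‖g' τ - g' 0 - τ * g'' 0‖ ≤ C * τ ^ 2 / 2 := by
    have := norm_le_mul_pow_succ_div_of_hasDerivAt (k := 1) (by simp)
      (fun τ hτ => ((hg' τ hτ).sub_const (g' 0)).sub (hasDerivAt_mul_const (g'' 0)))
      (by simpa only [Real.norm_eq_abs, pow_one] using hg'')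
    norm_num at this ⊢
    exact this
  have second_order := norm_le_mul_pow_succ_div_of_hasDerivAt (k := 2) (C := C / 2)
    (φ := fun τ => g τ - g 0 - τ * g' 0 - g'' 0 / 2 * τ ^ 2)
    (φ' := fun τ => g' τ - g' 0 - τ * g'' 0) (by simp)
    (fun τ hτ => ((((hg τ hτ).sub_const (g 0)).sub (hasDerivAt_mul_const (g' 0))).sub
        ((hasDerivAt_pow 2 τ).const_mul (g'' 0 / 2))).congr_deriv (by push_cast; ring))
    (fun τ hτ => by rw [div_mul_eq_mul_div]; exact first_order τ hτ) 1 (by simp)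
  norm_num [Real.norm_eq_abs] at second_order
  linarith

noncomputable def secondOrderTaylorRemainder (f : E → ℝ) (x d : E) : ℝ :=
  f (x + d) - f x - fderiv ℝ f x d - fderiv ℝ (fderiv ℝ f) x d d / 2

lemma abs_secondOrderTaylorRemainder_le {f : E → ℝ} {U : Set E} {x d : E} {L : ℝ}
    (hU : IsOpen U) (hf : ContDiffOn ℝ 2 f U) (hseg : segment ℝ x (x + d) ⊆ U)
    (hlip : ∀ y ∈ segment ℝ x (x + d),
      ‖iteratedFDeriv ℝ 2 f y - iteratedFDeriv ℝ 2 f x‖ ≤ L * ‖y - x‖) :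
    |secondOrderTaylorRemainder f x d| ≤ L * ‖d‖ ^ 3 / 6 := by
  set c : ℝ → E := fun τ => x + τ • d
  have hc_mem : ∀ τ ∈ Icc (0 : ℝ) 1, c τ ∈ segment ℝ x (x + d) := fun τ hτ => by
    rw [segment_eq_image']
    exact ⟨τ, hτ, by simp [c]⟩
  have hc : ∀ τ : ℝ, HasDerivAt c d τ := fun τ =>
    (((hasDerivAt_id τ).smul_const d).const_add x).congr_deriv (one_smul ℝ d)
  have hf_at : ∀ y ∈ U, ContDiffAt ℝ 2 f y := fun y hy => hf.contDiffAt (hU.mem_nhds hy)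
  have hDf : ∀ τ ∈ Icc (0 : ℝ) 1, HasFDerivAt f (fderiv ℝ f (c τ)) (c τ) := fun τ hτ =>
    ((hf_at _ (hseg (hc_mem τ hτ))).differentiableAt (by norm_num)).hasFDerivAt
  have hD2f : ∀ τ ∈ Icc (0 : ℝ) 1,
      HasFDerivAt (fderiv ℝ f) (fderiv ℝ (fderiv ℝ f) (c τ)) (c τ) := fun τ hτ =>
    (((hf_at _ (hseg (hc_mem τ hτ))).fderiv_right (m := 1) (by norm_num)).differentiableAt
      (by norm_num)).hasFDerivAt
  have hg'' : ∀ τ ∈ Icc (0 : ℝ) 1, |fderiv ℝ (fderiv ℝ f) (c τ) d d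
      - fderiv ℝ (fderiv ℝ f) (c 0) d d| ≤ L * ‖d‖ ^ 3 * τ := fun τ hτ => by
    have hτd : c τ - c 0 = τ • d := by simp [c]
    calc _ = ‖(iteratedFDeriv ℝ 2 f (c τ) - iteratedFDeriv ℝ 2 f x) ![d, d]‖ := by
          simp [iteratedFDeriv_two_apply, c]
      _ ≤ ‖iteratedFDeriv ℝ 2 f (c τ) - iteratedFDeriv ℝ 2 f x‖ * ‖d‖ ^ 2 :=
          (ContinuousMultilinearMap.le_opNorm _ _).trans_eq (by simp [Fin.prod_univ_two, sq])
      _ ≤ L * ‖c τ - c 0‖ * ‖d‖ ^ 2 := by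
          gcongr
          simpa [c] using hlip _ (hc_mem τ hτ)
      _ = L * ‖d‖ ^ 3 * τ := by
          rw [hτd, norm_smul, Real.norm_of_nonneg hτ.1]
          ring
  have := abs_taylor_remainder_two_le_of_hasDerivAt (g := f ∘ c)
    (g' := fun τ => fderiv ℝ f (c τ) d) (g'' := fun τ => fderiv ℝ (fderiv ℝ f) (c τ) d d)
    (fun τ hτ => (hDf τ hτ).comp_hasDerivAt τ (hc τ))
    (fun τ hτ => (((hD2f τ hτ).comp_hasDerivAt τ (hc τ)).clm_apply
      (hasDerivAt_const τ d)).congr_deriv (by simp)) hg''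
  simpa [c, secondOrderTaylorRemainder] using this

lemma cross_difference_eq_secondOrderTaylorRemainder {f : E → ℝ} {x : E}
    (hf : IsSymmSndFDerivAt ℝ f x) (s t : E) :
    f (x + s + t) - f (x + s) - f (x + t) + f x - fderiv ℝ (fderiv ℝ f) x s t =
      secondOrderTaylorRemainder f x (s + t) - secondOrderTaylorRemainder f x s
        - secondOrderTaylorRemainder f x t := by
  simp only [secondOrderTaylorRemainder, map_add, add_apply, add_assoc, hf t s]
  ring

end Taylor

theorem stmt9_general {n : ℕ} (f : EuclideanSpace ℝ (Fin n) → ℝ)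
    (x0 s t : EuclideanSpace ℝ (Fin n)) (Δ L : ℝ) (hΔ : 0 < Δ)
    (hf : ContDiffOn ℝ 3 f (ball x0 Δ))
    (hlip : ∀ x ∈ closedBall x0 Δ, ∀ y ∈ closedBall x0 Δ,
      ‖iteratedFDeriv ℝ 2 f x - iteratedFDeriv ℝ 2 f y‖ ≤ L * ‖x - y‖)
    (hs : x0 + s ∈ ball x0 Δ) (ht : x0 + t ∈ ball x0 Δ)
    (hst : x0 + s + t ∈ ball x0 Δ) :
    |f (x0 + s + t) - f (x0 + s) - f (x0 + t) + f x0 - iteratedFDeriv ℝ 2 f x0 ![s, t]| ≤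
      (1 / 6) * L * (‖s + t‖ ^ 3 + ‖s‖ ^ 3 + ‖t‖ ^ 3) := by
  have hx0 : x0 ∈ ball x0 Δ := mem_ball_self hΔ
  have hsymm : IsSymmSndFDerivAt ℝ f x0 :=
    (hf.contDiffAt (isOpen_ball.mem_nhds hx0)).isSymmSndFDerivAt (by norm_num)
  have hR : ∀ d, x0 + d ∈ ball x0 Δ →
      |secondOrderTaylorRemainder f x0 d| ≤ L * ‖d‖ ^ 3 / 6 := fun d hd =>
    abs_secondOrderTaylorRemainder_le isOpen_ball (hf.of_le (by norm_num))
      ((convex_ball x0 Δ).segment_subset hx0 hd) fun y hy =>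
        hlip y (ball_subset_closedBall ((convex_ball x0 Δ).segment_subset hx0 hd hy))
          x0 (mem_closedBall_self hΔ.le)
  have h1 := hR (s + t) (by rwa [← add_assoc])
  have h2 := hR s hs
  have h3 := hR t ht
  rw [iteratedFDeriv_two_apply, Matrix.cons_val_zero, Matrix.cons_val_one,
    Matrix.cons_val_fin_one, cross_difference_eq_secondOrderTaylorRemainder hsymm]
  calc _ ≤ |secondOrderTaylorRemainder f x0 (s + t)| + |secondOrderTaylorRemainder f x0 s|
        + |secondOrderTaylorRemainder f x0 t| :=
        (abs_sub _ _).trans (add_le_add_left (abs_sub _ _) _)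
    _ ≤ _ := by linarith

/-- Second-order Taylor estimate for the cross difference: if `f` is `C³` on the open
ball `B(x⁰;Δ̄)` with `∇²f` `L`-Lipschitz on the closed ball, and `x⁰+s`, `x⁰+t`,
`x⁰+s+t` lie in the ball with `‖s‖+‖t‖ ≤ Δ̄`, then
`|f(x⁰+s+t) − f(x⁰+s) − f(x⁰+t) + f(x⁰) − sᵀ∇²f(x⁰)t| ≤ (1/6)L(‖s+t‖³+‖s‖³+‖t‖³)`. -/
theorem stmt9 {n : ℕ} (f : EuclideanSpace ℝ (Fin n) → ℝ)
    (x0 s t : EuclideanSpace ℝ (Fin n)) (Δ L : ℝ) (hΔ : 0 < Δ) (hL : 0 ≤ L)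
    (hf : ContDiffOn ℝ 3 f (ball x0 Δ))
    (hlip : ∀ x ∈ closedBall x0 Δ, ∀ y ∈ closedBall x0 Δ,
      ‖iteratedFDeriv ℝ 2 f x - iteratedFDeriv ℝ 2 f y‖ ≤ L * ‖x - y‖)
    (hs : x0 + s ∈ ball x0 Δ) (ht : x0 + t ∈ ball x0 Δ)
    (hst : x0 + s + t ∈ ball x0 Δ) (hsum : ‖s‖ + ‖t‖ ≤ Δ) :
    |f (x0 + s + t) - f (x0 + s) - f (x0 + t) + f x0 - iteratedFDeriv ℝ 2 f x0 ![s, t]| ≤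
      (1 / 6) * L * (‖s + t‖ ^ 3 + ‖s‖ ^ 3 + ‖t‖ ^ 3) :=
  stmt9_general f x0 s t Δ L hΔ hf hlip hs ht hst
end

section
/- Let f: ℝ^n → ℝ be C⁴ on an open ball containing x⁰ with ∇³f Lipschitz with constant L, and let s ∈ ℝ^n with x⁰ ± s in the ball. Then |f(x⁰+s) + f(x⁰−s) − 2f(x⁰) − sᵀ∇²f(x⁰)s| ≤ (1/12)L‖s‖⁴. -/
/-!
Taylor's formula with integral remainder to third order along `t ↦ x⁰ ± t s` gives
`f(x⁰ ± s) = f(x⁰) ± Df(x⁰)s + D²f(x⁰)(s,s)/2 ± D³f(x⁰)(s,s,s)/6 + R±` with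
`|R±| ≤ sup ‖D⁴f‖ ‖s‖⁴/4!`, and `‖D⁴f‖ ≤ L` on the open ball because `D³f` is `L`-Lipschitz there.
Adding the two expansions cancels the odd-order terms.
-/

open Metric Set Finset Nat

variable {E F : Type*} [NormedAddCommGroup E] [NormedSpace ℝ E]
  [NormedAddCommGroup F] [NormedSpace ℝ F]

theorem integral_one_sub_pow (n : ℕ) : ∫ t in (0:ℝ)..1, (1 - t) ^ n = 1 / (n + 1) := by
  simp [intervalIntegral.integral_comp_sub_left (fun t : ℝ => t ^ n)]

theorem norm_map_add_sub_sum_iteratedFDeriv_le [CompleteSpace F] {f : E → F} {x y : E} {n : ℕ}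
    {M : ℝ} (hf : ∀ t ∈ Icc (0:ℝ) 1, ContDiffAt ℝ (n + 1) f (x + t • y))
    (hM : ∀ t ∈ Icc (0:ℝ) 1, ‖iteratedFDeriv ℝ (n + 1) f (x + t • y)‖ ≤ M) :
    ‖f (x + y) - ∑ k ∈ range (n + 1), (k ! : ℝ)⁻¹ • iteratedFDeriv ℝ k f x (fun _ ↦ y)‖ ≤
      M * ‖y‖ ^ (n + 1) / (n + 1)! := by
  have hint : ‖∫ t in (0:ℝ)..1, (1 - t) ^ n • iteratedFDeriv ℝ (n + 1) f (x + t • y) (fun _ ↦ y)‖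
      ≤ ∫ t in (0:ℝ)..1, (1 - t) ^ n * (M * ‖y‖ ^ (n + 1)) := by
    refine intervalIntegral.norm_integral_le_of_norm_le zero_le_one
      (Filter.Eventually.of_forall fun t ht => ?_) (Continuous.intervalIntegrable (by fun_prop) _ _)
    have ht' : t ∈ Icc (0:ℝ) 1 := Ioc_subset_Icc_self ht
    have hD : ‖iteratedFDeriv ℝ (n + 1) f (x + t • y) (fun _ ↦ y)‖ ≤ M * ‖y‖ ^ (n + 1) := by
      simpa using ContinuousMultilinearMap.le_of_opNorm_le (hM t ht') (fun _ ↦ y)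
    rw [norm_smul, Real.norm_of_nonneg (pow_nonneg (sub_nonneg.2 ht'.2) n)]
    exact mul_le_mul_of_nonneg_left hD (pow_nonneg (sub_nonneg.2 ht'.2) n)
  rw [map_add_eq_sum_add_integral_iteratedFDeriv hf, add_sub_cancel_left, norm_smul,
    Real.norm_of_nonneg (by positivity)]
  calc (n ! : ℝ)⁻¹ * ‖_‖ ≤ (n ! : ℝ)⁻¹ * ∫ t in (0:ℝ)..1, (1 - t) ^ n * (M * ‖y‖ ^ (n + 1)) := by
        gcongr
    _ = M * ‖y‖ ^ (n + 1) / (n + 1)! := by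
        rw [intervalIntegral.integral_mul_const, integral_one_sub_pow, factorial_succ]
        push_cast
        field_simp

theorem norm_iteratedFDeriv_succ_le_of_lipschitzOnWith {f : E → F} {s : Set E} {x : E} {n : ℕ}
    {K : NNReal} (hs : s ∈ nhds x) (hf : LipschitzOnWith K (iteratedFDeriv ℝ n f) s) :
    ‖iteratedFDeriv ℝ (n + 1) f x‖ ≤ K := by
  rw [← norm_fderiv_iteratedFDeriv]
  exact norm_fderiv_le_of_lipschitzOn ℝ hs hf

theorem ContinuousMultilinearMap.apply_neg_const {R M N : Type*} [CommRing R]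
    [AddCommGroup M] [Module R M] [TopologicalSpace M] [AddCommGroup N] [Module R N]
    [TopologicalSpace N] {n : ℕ} (p : ContinuousMultilinearMap R (fun _ : Fin n ↦ M) N) (v : M) :
    p (fun _ ↦ -v) = (-1 : R) ^ n • p (fun _ ↦ v) := by
  simpa using p.map_smul_univ (fun _ ↦ (-1 : R)) (fun _ : Fin n ↦ v)

/-- Centered second-difference estimate: if `f` is `C⁴` on an open ball containing `x⁰`
with `∇³f` `L`-Lipschitz, and `x⁰ ± s` lie in the ball, then
`|f(x⁰+s) + f(x⁰−s) − 2f(x⁰) − sᵀ∇²f(x⁰)s| ≤ (1/12)L‖s‖⁴`. -/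
theorem stmt10 {n : ℕ} (f : EuclideanSpace ℝ (Fin n) → ℝ)
    (x0 s : EuclideanSpace ℝ (Fin n)) (Δ L : ℝ) (hΔ : 0 < Δ) (hL : 0 ≤ L)
    (hf : ContDiffOn ℝ 4 f (ball x0 Δ))
    (hlip : ∀ x ∈ closedBall x0 Δ, ∀ y ∈ closedBall x0 Δ,
      ‖iteratedFDeriv ℝ 3 f x - iteratedFDeriv ℝ 3 f y‖ ≤ L * ‖x - y‖)
    (hs : x0 + s ∈ ball x0 Δ) (hs' : x0 - s ∈ ball x0 Δ) :
    |f (x0 + s) + f (x0 - s) - 2 * f x0 - iteratedFDeriv ℝ 2 f x0 ![s, s]| ≤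
      (1 / 12) * L * ‖s‖ ^ 4 := by
  have hD4 : ∀ y ∈ ball x0 Δ, ‖iteratedFDeriv ℝ 4 f y‖ ≤ L := fun y hy ↦
    norm_iteratedFDeriv_succ_le_of_lipschitzOnWith (K := ⟨L, hL⟩)
      (Filter.mem_of_superset (isOpen_ball.mem_nhds hy) ball_subset_closedBall)
      (lipschitzOnWith_iff_norm_sub_le.2 hlip)
  set T : EuclideanSpace ℝ (Fin n) → ℝ :=
    fun v ↦ ∑ k ∈ range 4, (k ! : ℝ)⁻¹ • iteratedFDeriv ℝ k f x0 (fun _ ↦ v)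
  have taylor : ∀ v, x0 + v ∈ ball x0 Δ → |f (x0 + v) - T v| ≤ L * ‖v‖ ^ 4 / 24 := by
    intro v hv
    have hseg : ∀ t ∈ Icc (0:ℝ) 1, x0 + t • v ∈ ball x0 Δ := fun t ht ↦
      (convex_ball x0 Δ).add_smul_mem (mem_ball_self hΔ) hv ht
    exact norm_map_add_sub_sum_iteratedFDeriv_le
      (fun t ht ↦ hf.contDiffAt (isOpen_ball.mem_nhds (hseg t ht)))
      (fun t ht ↦ hD4 _ (hseg t ht))
  have hs'' : x0 + -s ∈ ball x0 Δ := by rwa [← sub_eq_add_neg]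
  have hHess : iteratedFDeriv ℝ 2 f x0 ![s, s] = iteratedFDeriv ℝ 2 f x0 (fun _ ↦ s) := by
    congr 1; ext i; fin_cases i <;> rfl
  have hodd_cancel : T s + T (-s) = 2 * f x0 + iteratedFDeriv ℝ 2 f x0 ![s, s] := by
    simp only [T, sum_range_succ, Finset.sum_range_zero, ContinuousMultilinearMap.apply_neg_const,
      hHess, factorial, smul_eq_mul, iteratedFDeriv_zero_apply]
    push_cast
    ring
  calc |f (x0 + s) + f (x0 - s) - 2 * f x0 - iteratedFDeriv ℝ 2 f x0 ![s, s]|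
      = |(f (x0 + s) - T s) + (f (x0 + -s) - T (-s))| := by
        rw [← sub_eq_add_neg]; congr 1; linarith
    _ ≤ |f (x0 + s) - T s| + |f (x0 + -s) - T (-s)| := abs_add_le _ _
    _ ≤ L * ‖s‖ ^ 4 / 24 + L * ‖-s‖ ^ 4 / 24 := add_le_add (taylor s hs) (taylor (-s) hs'')
    _ = 1 / 12 * L * ‖s‖ ^ 4 := by rw [norm_neg]; ring
end

section
/- Let f(x) be a polynomial of degree at most 2 on ℝ^n with Hessian H, let v ∈ ℝ^n be nonzero, h ≠ 0, and S ∈ ℝ^{n×n} invertible. Then the generalized simplex Hessian with T̄ = hv applied to v recovers the Hessian-vector product exactly: ∇²_s f(x⁰; S, hv) v = H v. -/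
open Matrix

/-!
Since `f` is quadratic with symmetric Hessian, the mixed second difference
`f(y + s + u) - f(y + s) - f(y + u) + f(y)` equals `sᵀ H u` exactly. With `u = h v` and `s = sʲ`,
row `j` of `δ` is therefore `(sʲᵀ H v) vᵀ / ‖v‖²`, so `δ v = Sᵀ H v`, and `(Sᵀ)⁻¹` cancels `Sᵀ`.
-/

section

variable {ι κ 𝕜 : Type*} [Fintype ι] [Field 𝕜]

theorem dotProduct_mulVec_comm_of_transpose_eq {H : Matrix ι ι 𝕜} (hH : Hᵀ = H) (x y : ι → 𝕜) :
    x ⬝ᵥ H *ᵥ y = y ⬝ᵥ H *ᵥ x := by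
  rw [dotProduct_mulVec, dotProduct_comm, ← mulVec_transpose, hH]

theorem quadratic_second_difference [CharZero 𝕜] {c : 𝕜} {g : ι → 𝕜} {H : Matrix ι ι 𝕜}
    (hH : Hᵀ = H) {f : (ι → 𝕜) → 𝕜} (hf : ∀ x, f x = c + g ⬝ᵥ x + (1 / 2) * (x ⬝ᵥ H *ᵥ x))
    (y s u : ι → 𝕜) :
    (f (y + s + u) - f (y + s)) - (f (y + u) - f y) = s ⬝ᵥ H *ᵥ u := by
  simp only [hf, mulVec_add, dotProduct_add, add_dotProduct]
  rw [dotProduct_mulVec_comm_of_transpose_eq hH y s, dotProduct_mulVec_comm_of_transpose_eq hH y u,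
    dotProduct_mulVec_comm_of_transpose_eq hH u s]
  ring

theorem mulVec_eq_of_apply_eq_div_mul [LinearOrder 𝕜] [IsStrictOrderedRing 𝕜] {v : ι → 𝕜}
    (hv : v ≠ 0) {h : 𝕜} (hh : h ≠ 0) {δ : Matrix κ ι 𝕜} {d : κ → 𝕜}
    (hδ : ∀ j i, δ j i = h * d j / (h ^ 2 * ∑ k, v k ^ 2) * (h * v i)) :
    δ *ᵥ v = d := by
  have hv2 : ∑ k, v k ^ 2 ≠ 0 := by
    simpa only [dotProduct, sq] using mt dotProduct_self_eq_zero.mp hv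
  ext j
  simp only [mulVec, dotProduct, hδ]
  calc ∑ i, h * d j / (h ^ 2 * ∑ k, v k ^ 2) * (h * v i) * v i
      = ∑ i, d j / (∑ k, v k ^ 2) * v i ^ 2 := Finset.sum_congr rfl fun i _ => by field_simp
    _ = d j := by rw [← Finset.mul_sum, div_mul_cancel₀ _ hv2]

end

/-- Exactness of the generalized simplex Hessian applied to `v` for quadratics:
for `f(x) = c + gᵀx + (1/2)xᵀHx` with `H` symmetric, `v ≠ 0`, `h ≠ 0`, and
`S ∈ ℝ^{n×n}` invertible, the GSH with `T̄ = hv` (built from the simplex gradients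
`∇_s f(y;hv) = ((hv)ᵀ)†(f(y+hv)−f(y))`) satisfies `∇²_s f(x⁰;S,hv) v = Hv`. -/
theorem stmt12 {n : ℕ} (c : ℝ) (g : Fin n → ℝ) (H : Matrix (Fin n) (Fin n) ℝ)
    (hH : Hᵀ = H) (f : (Fin n → ℝ) → ℝ)
    (hf : ∀ x, f x = c + g ⬝ᵥ x + (1 / 2) * (x ⬝ᵥ H.mulVec x))
    (x0 v : Fin n → ℝ) (hv : v ≠ 0) (h : ℝ) (hh : h ≠ 0)
    (S : Matrix (Fin n) (Fin n) ℝ) (hS : IsUnit S.det)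
    (δ : Matrix (Fin n) (Fin n) ℝ)
    (hδ : ∀ j i, δ j i =
      (((f (x0 + (fun i' => S i' j) + h • v) - f (x0 + (fun i' => S i' j)))
          - (f (x0 + h • v) - f x0)) / (h ^ 2 * ∑ k, (v k) ^ 2)) * (h * v i)) :
    ((Sᵀ)⁻¹ * δ).mulVec v = H.mulVec v := by
  have hδv : δ *ᵥ v = Sᵀ *ᵥ (H *ᵥ v) := by
    refine mulVec_eq_of_apply_eq_div_mul hv hh fun j i => ?_
    rw [hδ, quadratic_second_difference hH hf, mulVec_smul, dotProduct_smul, smul_eq_mul]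
    rfl
  have hST : IsUnit Sᵀ.det := by rwa [det_transpose]
  rw [← mulVec_mulVec, hδv, mulVec_mulVec, nonsing_inv_mul _ hST, one_mulVec]
end

section
/- Let S ∈ ℝ^{n×m} be a partial diagonal matrix with full column rank, columns sʲ = c_j e^{u_j}, and let W ∈ ℝ^{n×m} have columns sʲ ⊙ sʲ (Hadamard squares). Then (Wᵀ)† ε, where ε_j = f(x⁰+sʲ)+f(x⁰−sʲ)−2f(x⁰), is the vector z ∈ ℝ^n with z_{u_j} = ε_j/c_j² and z_i = 0 for i ∉ {u_1,…,u_m}; moreover z equals the vector of diagonal entries of the generalized centered simplex Hessian ∇²_c f(x⁰;S,T_{1:m}) with T_j = −sʲ. -/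
/-!
Every matrix in sight is "partial diagonal": column `j` is supported on row `u j`. For such a
matrix with nonzero entries `d j` the transpose has the pseudoinverse with entries `(d j)⁻¹`
(the Moore–Penrose equations are checked directly, and the pseudoinverse is unique), so
`(Wᵀ)† ε` has entry `ε j / c j ^ 2` at `u j`. On the other side, the two one-column simplex
gradients along `∓ sʲ` combine into `(ε j / ‖sʲ‖²) sʲ`, so both halves of the centered Hessian
equal `(Sᵀ)† diag(ε / c²) Sᵀ`, whose diagonal is again `ε j / c j ^ 2` at `u j`.
-/

open Matrix

lemma IsMPInv.unique {k l : ℕ} {A : Matrix (Fin k) (Fin l) ℝ} {B C : Matrix (Fin l) (Fin k) ℝ}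
    (hB : IsMPInv A B) (hC : IsMPInv A C) : B = C := by
  obtain ⟨hB1, hB2, hB3, hB4⟩ := hB
  obtain ⟨hC1, hC2, hC3, hC4⟩ := hC
  have hAB : A * B = A * C :=
    calc A * B = Bᵀ * (A * C * A)ᵀ := by rw [hC1, ← transpose_mul, hB3]
      _ = (A * B)ᵀ * (A * C)ᵀ := by simp only [transpose_mul, Matrix.mul_assoc]
      _ = A * B * A * C := by rw [hB3, hC3, Matrix.mul_assoc (A * B)]
      _ = A * C := by rw [hB1]
  have hBA : B * A = C * A :=
    calc B * A = (A * C * A)ᵀ * Bᵀ := by rw [hC1, ← transpose_mul, hB4]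
      _ = (C * A)ᵀ * (B * A)ᵀ := by simp only [transpose_mul, Matrix.mul_assoc]
      _ = C * (A * B * A) := by rw [hB4, hC4]; simp only [Matrix.mul_assoc]
      _ = C * A := by rw [hB1]
  calc B = B * A * B := hB2.symm
    _ = C * A * C := by rw [Matrix.mul_assoc, hAB, ← Matrix.mul_assoc, hBA]
    _ = C := hC2

lemma IsMPInv.neg {k l : ℕ} {A : Matrix (Fin k) (Fin l) ℝ} {B : Matrix (Fin l) (Fin k) ℝ}
    (h : IsMPInv A B) : IsMPInv (-A) (-B) := by
  simpa only [IsMPInv, Matrix.neg_mul, Matrix.mul_neg, neg_neg, transpose_neg, neg_inj] using h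

section PartialDiag

variable {n m : ℕ} (u : Fin m → Fin n)

def partialDiag (d : Fin m → ℝ) : Matrix (Fin n) (Fin m) ℝ :=
  of fun i j => if i = u j then d j else 0

lemma partialDiag_mulVec (d v : Fin m → ℝ) :
    partialDiag u d *ᵥ v = ∑ j, (d j * v j) • Pi.single (u j) 1 := by
  ext i
  simp [partialDiag, mulVec, dotProduct, Pi.single_apply]

lemma partialDiag_mul_diagonal_mul_transpose_apply_self (e v d : Fin m → ℝ) (i : Fin n) :
    (partialDiag u e * diagonal v * (partialDiag u d)ᵀ) i i = (partialDiag u (e * d) *ᵥ v) i := by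
  rw [mul_apply]
  simp only [mul_diagonal, transpose_apply, partialDiag, of_apply, mulVec, dotProduct,
    Pi.mul_apply]
  refine Finset.sum_congr rfl fun j _ => ?_
  split_ifs <;> ring

lemma partialDiag_hadamard_self (d : Fin m → ℝ) :
    partialDiag u d ⊙ partialDiag u d = partialDiag u (d ^ 2) := by
  ext i j
  simp only [hadamard_apply, partialDiag, of_apply, Pi.pow_apply]
  split_ifs <;> ring

lemma sum_partialDiag_sq (d : Fin m → ℝ) (j : Fin m) :
    ∑ i, partialDiag u d i j ^ 2 = d j ^ 2 := by
  simp [partialDiag, apply_ite (· ^ 2)]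

variable {u}

lemma transpose_partialDiag_mul_partialDiag (hu : Function.Injective u) (d e : Fin m → ℝ) :
    (partialDiag u d)ᵀ * partialDiag u e = diagonal (d * e) := by
  ext j k
  simp only [transpose_apply, mul_apply, partialDiag, of_apply, diagonal_apply, Pi.mul_apply]
  rw [Finset.sum_eq_single (u j) (fun i _ hi => by simp [hi]) (by simp)]
  by_cases h : j = k
  · simp [h]
  · simp [hu.ne h, h]

lemma isMPInv_transpose_partialDiag (hu : Function.Injective u) {d : Fin m → ℝ}
    (hd : ∀ j, d j ≠ 0) : IsMPInv (partialDiag u d)ᵀ (partialDiag u d⁻¹) := by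
  have hAB : (partialDiag u d)ᵀ * partialDiag u d⁻¹ = 1 := by
    rw [transpose_partialDiag_mul_partialDiag hu, ← diagonal_one]
    exact congrArg diagonal (funext fun j => mul_inv_cancel₀ (hd j))
  refine ⟨by rw [hAB, Matrix.one_mul], by rw [Matrix.mul_assoc, hAB, Matrix.mul_one],
    by rw [hAB, transpose_one], ?_⟩
  ext i i'
  simp only [transpose_apply, mul_apply, partialDiag, of_apply]
  refine Finset.sum_congr rfl fun j _ => ?_
  by_cases h : i = u j <;> by_cases h' : i' = u j <;> simp [h, h', mul_comm]

end PartialDiag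

section SimplexGradient

variable {n : ℕ} (f : (Fin n → ℝ) → ℝ) (x s : Fin n → ℝ)

noncomputable def simplexGrad (y t : Fin n → ℝ) : Fin n → ℝ :=
  ((f (y + t) - f y) / ∑ i, t i ^ 2) • t

lemma simplexGrad_add_neg_sub :
    simplexGrad f (x + s) (-s) - simplexGrad f x (-s) =
      ((f (x + s) + f (x - s) - 2 * f x) / ∑ i, s i ^ 2) • s := by
  ext i
  simp only [simplexGrad, ← sub_eq_add_neg, add_sub_cancel_right, Pi.neg_apply, neg_sq,
    Pi.sub_apply, Pi.smul_apply, smul_eq_mul]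
  ring

lemma simplexGrad_sub_sub :
    simplexGrad f (x - s) s - simplexGrad f x s =
      -(((f (x + s) + f (x - s) - 2 * f x) / ∑ i, s i ^ 2) • s) := by
  ext i
  simp only [simplexGrad, sub_add_cancel, Pi.neg_apply, Pi.sub_apply, Pi.smul_apply, smul_eq_mul]
  ring

end SimplexGradient

theorem stmt15_general {n m : ℕ}
    (f : (Fin n → ℝ) → ℝ) (x0 : Fin n → ℝ)
    (u : Fin m → Fin n) (hu : Function.Injective u)
    (c : Fin m → ℝ) (hc : ∀ j, c j ≠ 0)
    (S : Matrix (Fin n) (Fin m) ℝ)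
    (hS : ∀ i j, S i j = if i = u j then c j else 0)
    (W : Matrix (Fin n) (Fin m) ℝ) (hW : ∀ i j, W i j = (S i j) ^ 2)
    (ε : Fin m → ℝ)
    (hε : ∀ j, ε j = f (x0 + fun i => S i j) + f (x0 - fun i => S i j) - 2 * f x0)
    (Wp : Matrix (Fin n) (Fin m) ℝ) (hWp : IsMPInv Wᵀ Wp)
    (Sp : Matrix (Fin n) (Fin m) ℝ) (hSp : IsMPInv Sᵀ Sp)
    (Sp' : Matrix (Fin n) (Fin m) ℝ) (hSp' : IsMPInv (-S)ᵀ Sp')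
    (sg : (Fin n → ℝ) → (Fin n → ℝ) → (Fin n → ℝ))
    (hsg : ∀ y t, sg y t = ((f (y + t) - f y) / (∑ i, (t i) ^ 2)) • t)
    (δ1 δ2 : Matrix (Fin m) (Fin n) ℝ)
    (hδ1 : ∀ j i, δ1 j i =
      (sg (x0 + fun i' => S i' j) (-(fun i' => S i' j)) - sg x0 (-(fun i' => S i' j))) i)
    (hδ2 : ∀ j i, δ2 j i =
      (sg (x0 - fun i' => S i' j) (fun i' => S i' j) - sg x0 (fun i' => S i' j)) i)
    (GCSH : Matrix (Fin n) (Fin n) ℝ)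
    (hGCSH : GCSH = (1 / 2 : ℝ) • (Sp * δ1 + Sp' * δ2))
    (z : Fin n → ℝ)
    (hz : z = ∑ j, (ε j / (c j) ^ 2) • (Pi.single (u j) (1 : ℝ) : Fin n → ℝ)) :
    Wp.mulVec ε = z ∧ ∀ i, GCSH i i = z i := by
  obtain rfl : S = partialDiag u c := Matrix.ext hS
  obtain rfl : W = partialDiag u c ⊙ partialDiag u c := Matrix.ext fun i j => (hW i j).trans (sq _)
  obtain rfl : sg = simplexGrad f := funext fun y => funext fun t => hsg y t
  rw [partialDiag_hadamard_self] at hWp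
  replace hWp : Wp = partialDiag u (c ^ 2)⁻¹ :=
    hWp.unique (isMPInv_transpose_partialDiag hu fun j => pow_ne_zero 2 (hc j))
  replace hSp' : Sp' = -Sp := hSp'.unique (by rw [transpose_neg]; exact hSp.neg)
  replace hSp : Sp = partialDiag u c⁻¹ := hSp.unique (isMPInv_transpose_partialDiag hu hc)
  replace hδ2 : δ2 = -δ1 := by
    ext j i
    rw [hδ2, neg_apply, hδ1, simplexGrad_sub_sub, simplexGrad_add_neg_sub]
    rfl
  replace hδ1 : δ1 = diagonal (ε / c ^ 2) * (partialDiag u c)ᵀ := by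
    ext j i
    rw [hδ1, simplexGrad_add_neg_sub, ← hε, sum_partialDiag_sq, diagonal_mul]
    rfl
  replace hGCSH : GCSH = Sp * δ1 := by
    rw [hGCSH, hSp', hδ2, Matrix.neg_mul, Matrix.mul_neg, neg_neg, ← two_smul ℝ, smul_smul]
    norm_num
  have hc_inv_mul : c⁻¹ * c = 1 := funext fun j => inv_mul_cancel₀ (hc j)
  refine ⟨?_, fun i => ?_⟩
  · rw [hWp, hz, partialDiag_mulVec]
    simp only [Pi.inv_apply, Pi.pow_apply, inv_mul_eq_div]
  · rw [hGCSH, hSp, hδ1, ← Matrix.mul_assoc,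
      partialDiag_mul_diagonal_mul_transpose_apply_self, hc_inv_mul, partialDiag_mulVec, hz]
    simp only [Pi.one_apply, one_mul, Pi.div_apply, Pi.pow_apply]

/-- Let `S ∈ ℝ^{n×m}` be a partial diagonal matrix with full column rank, columns
`sʲ = c_j e^{u_j}`, and `W` the matrix of Hadamard squares `sʲ ⊙ sʲ`.  With
`ε_j = f(x⁰+sʲ)+f(x⁰−sʲ)−2f(x⁰)`, the centered simplex Hessian diagonal
`(Wᵀ)† ε` equals the vector `z = Σ_j (ε_j/c_j²) e^{u_j}` (zero outside
`{u_1,…,u_m}`); moreover `z` equals the vector of diagonal entries of the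
generalized centered simplex Hessian `∇²_c f(x⁰;S,T_{1:m})` with `T_j = −sʲ`,
where `∇²_c = (1/2)(∇²_s f(x⁰;S,T_{1:m}) + ∇²_s f(x⁰;−S,−T_{1:m}))`,
`∇²_s f(x⁰;S,T_{1:m}) = (Sᵀ)† δ²` with row `j` of `δ²` given by
`(∇_s f(x⁰+sʲ;T_j) − ∇_s f(x⁰;T_j))ᵀ`, and for a single column `t`,
`∇_s f(y;t) = (tᵀ)†(f(y+t)−f(y)) = ((f(y+t)−f(y))/‖t‖²) t`. -/
theorem stmt15 {n m : ℕ} (hm : m ≤ n)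
    (f : (Fin n → ℝ) → ℝ) (x0 : Fin n → ℝ)
    (u : Fin m → Fin n) (hu : Function.Injective u)
    (c : Fin m → ℝ) (hc : ∀ j, c j ≠ 0)
    (S : Matrix (Fin n) (Fin m) ℝ)
    (hS : ∀ i j, S i j = if i = u j then c j else 0)
    (W : Matrix (Fin n) (Fin m) ℝ) (hW : ∀ i j, W i j = (S i j) ^ 2)
    (ε : Fin m → ℝ)
    (hε : ∀ j, ε j = f (x0 + fun i => S i j) + f (x0 - fun i => S i j) - 2 * f x0)
    (Wp : Matrix (Fin n) (Fin m) ℝ) (hWp : IsMPInv Wᵀ Wp)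
    (Sp : Matrix (Fin n) (Fin m) ℝ) (hSp : IsMPInv Sᵀ Sp)
    (Sp' : Matrix (Fin n) (Fin m) ℝ) (hSp' : IsMPInv (-S)ᵀ Sp')
    (sg : (Fin n → ℝ) → (Fin n → ℝ) → (Fin n → ℝ))
    (hsg : ∀ y t, sg y t = ((f (y + t) - f y) / (∑ i, (t i) ^ 2)) • t)
    (δ1 δ2 : Matrix (Fin m) (Fin n) ℝ)
    (hδ1 : ∀ j i, δ1 j i =
      (sg (x0 + fun i' => S i' j) (-(fun i' => S i' j)) - sg x0 (-(fun i' => S i' j))) i)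
    (hδ2 : ∀ j i, δ2 j i =
      (sg (x0 - fun i' => S i' j) (fun i' => S i' j) - sg x0 (fun i' => S i' j)) i)
    (GCSH : Matrix (Fin n) (Fin n) ℝ)
    (hGCSH : GCSH = (1 / 2 : ℝ) • (Sp * δ1 + Sp' * δ2))
    (z : Fin n → ℝ)
    (hz : z = ∑ j, (ε j / (c j) ^ 2) • (Pi.single (u j) (1 : ℝ) : Fin n → ℝ)) :
    Wp.mulVec ε = z ∧ ∀ i, GCSH i i = z i :=
  stmt15_general f x0 u hu c hc S hS W hW ε hε Wp hWp Sp hSp Sp' hSp' sg hsg δ1 δ2 hδ1 hδ2 GCSH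
    hGCSH z hz
end
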